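/- arXiv:2109.04855 — 2 statements merged into one kernel-verified Lean document; each statement's English description precedes it below -/
import Mathlib

section
/- If M = {S₁,...,S_ν} consists of pairwise disjoint nonempty subsets of [n], then every maximal face of Σ(M) has exactly n − ν elements. -/
/-!
Each `x ∉ σ` can be added to a maximal face `σ` only by completing some `Sᵢ`, so `x ∈ Sᵢ` and
`Sᵢ ⊆ insert x σ`. Disjointness makes that `i` unique, so every `Sᵢ \ σ` is a single point and
these points partition the complement of `σ`; hence `|σᶜ| = ν`.
-/

namespace Finset

variable {α ι : Type*} [DecidableEq α] {S : ι → Finset α} {σ : Finset α}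

theorem exists_mem_subset_insert_of_maximal (hmax : Maximal (fun τ => ∀ i, ¬ S i ⊆ τ) σ)
    {x : α} (hx : x ∉ σ) : ∃ i, x ∈ S i ∧ S i ⊆ insert x σ := by
  by_contra! h
  have hface : ∀ i, ¬ S i ⊆ insert x σ := by
    intro i hi
    by_cases hxi : x ∈ S i
    · exact h i hxi hi
    · exact hmax.1 i fun y hy => (mem_insert.1 (hi hy)).resolve_left (ne_of_mem_of_not_mem hy hxi)
  exact hx (hmax.2 hface (subset_insert x σ) (mem_insert_self x σ))

theorem card_sdiff_eq_one_of_maximal (hdisj : Pairwise fun i j => Disjoint (S i) (S j))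
    (hmax : Maximal (fun τ => ∀ i, ¬ S i ⊆ τ) σ) (i : ι) : (S i \ σ).card = 1 := by
  obtain ⟨x, hxS, hxσ⟩ := not_subset.1 (hmax.1 i)
  obtain ⟨j, hxSj, hSj⟩ := exists_mem_subset_insert_of_maximal hmax hxσ
  obtain rfl : j = i := by
    by_contra hji
    exact disjoint_left.1 (hdisj hji) hxSj hxS
  refine card_eq_one.2 ⟨x, eq_singleton_iff_unique_mem.2 ⟨mem_sdiff.2 ⟨hxS, hxσ⟩, ?_⟩⟩
  intro y hy
  obtain ⟨hyS, hyσ⟩ := mem_sdiff.1 hy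
  exact (mem_insert.1 (hSj hyS)).resolve_right hyσ

variable [Fintype α] [Fintype ι]

theorem compl_eq_biUnion_sdiff_of_maximal (hmax : Maximal (fun τ => ∀ i, ¬ S i ⊆ τ) σ) :
    σᶜ = univ.biUnion fun i => S i \ σ := by
  ext x
  simp only [mem_compl, mem_biUnion, mem_univ, true_and, mem_sdiff]
  constructor
  · intro hx
    obtain ⟨i, hxS, -⟩ := exists_mem_subset_insert_of_maximal hmax hx
    exact ⟨i, hxS, hx⟩
  · rintro ⟨i, -, hx⟩
    exact hx

theorem card_compl_eq_card_of_maximal (hdisj : Pairwise fun i j => Disjoint (S i) (S j))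
    (hmax : Maximal (fun τ => ∀ i, ¬ S i ⊆ τ) σ) : σᶜ.card = Fintype.card ι := by
  have hdisj' : ((univ : Finset ι) : Set ι).PairwiseDisjoint fun i => S i \ σ :=
    fun i _ j _ hij => (hdisj hij).mono sdiff_subset sdiff_subset
  rw [compl_eq_biUnion_sdiff_of_maximal hmax, card_biUnion hdisj']
  simp [card_sdiff_eq_one_of_maximal hdisj hmax]

end Finset

theorem stmt5_general (n ν : ℕ) (S : Fin ν → Finset (Fin n))
    (hdisj : Pairwise (fun i j => Disjoint (S i) (S j)))
    (σ : Finset (Fin n))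
    (hmax : Maximal (fun σ : Finset (Fin n) => ∀ i, ¬ S i ⊆ σ) σ) :
    σ.card = n - ν := by
  have hcompl := Finset.card_compl_eq_card_of_maximal hdisj hmax
  rw [Finset.card_compl, Fintype.card_fin, Fintype.card_fin] at hcompl
  have hle : σ.card ≤ n := by simpa using σ.card_le_univ
  omega

/-- If `M = {S₁, ..., S_ν}` consists of pairwise disjoint nonempty subsets of
`[n]`, then every maximal face of `Σ(M) = {σ : ∀ i, ¬ S i ⊆ σ}` has exactly
`n - ν` elements. -/
theorem stmt5 (n ν : ℕ) (S : Fin ν → Finset (Fin n))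
    (hdisj : Pairwise (fun i j => Disjoint (S i) (S j)))
    (hinj : Function.Injective S)
    (hne : ∀ i, (S i).Nonempty) (σ : Finset (Fin n))
    (hmax : Maximal (fun σ : Finset (Fin n) => ∀ i, ¬ S i ⊆ σ) σ) :
    σ.card = n - ν :=
  stmt5_general n ν S hdisj σ hmax
end

section
/- Let k ≥ 2 and d with d + 3 ≥ 2k. If Σ is a simplicial complex on the vertex set [d+3] whose number of (k−1)-dimensional faces (k-element faces) is strictly less than C(d+2, k), then the family F of minimal non-faces of Σ (equivalently, the family of all non-faces) is not intersecting: there exist two disjoint subsets of [d+3] neither of which is a face of Σ. -/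
/-!
The non-faces of size `k` form a `k`-uniform family; if no two non-faces are disjoint it is
intersecting, so Erdős–Ko–Rado bounds it by `C(n-1, k-1)`. The faces of size `k` are then at least
`C(n, k) - C(n-1, k-1) = C(n-1, k)` in number.
-/

open Finset

theorem card_sized_mem_add_card_sized_notMem {α : Type*} [Fintype α] [DecidableEq α]
    (K : Finset (Finset α)) (k : ℕ) :
    #{σ : Finset α | #σ = k ∧ σ ∈ K} + #{σ : Finset α | #σ = k ∧ σ ∉ K} =
      (Fintype.card α).choose k := by
  have hslice : ({σ : Finset α | #σ = k} : Finset _) = powersetCard k univ := by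
    ext σ
    simp
  have h := card_filter_add_card_filter_not (s := {σ : Finset α | #σ = k}) (· ∈ K)
  rwa [filter_filter, filter_filter, hslice, card_powersetCard, card_univ] at h

section
variable {n : ℕ} {K : Finset (Finset (Fin n))}

theorem card_sized_notMem_le_of_not_disjoint {k : ℕ} (hkn : 2 * k ≤ n)
    (hK : ∀ σ τ, σ ∉ K → τ ∉ K → ¬Disjoint σ τ) :
    #{σ : Finset (Fin n) | #σ = k ∧ σ ∉ K} ≤ (n - 1).choose (k - 1) := by
  refine erdos_ko_rado ?_ ?_ (by omega)
  · intro σ hσ τ hτ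
    simp only [coe_filter, mem_univ, true_and, Set.mem_ofPred_eq] at hσ hτ
    exact hK σ τ hσ.2 hτ.2
  · intro σ hσ
    simp only [coe_filter, mem_univ, true_and, Set.mem_ofPred_eq] at hσ
    exact hσ.1

theorem exists_disjoint_notMem_of_card_sized_mem_lt {k : ℕ} (hk : 1 ≤ k) (hkn : 2 * k ≤ n)
    (hcount : #{σ : Finset (Fin n) | #σ = k ∧ σ ∈ K} < (n - 1).choose k) :
    ∃ σ τ : Finset (Fin n), Disjoint σ τ ∧ σ ∉ K ∧ τ ∉ K := by
  by_contra! hK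
  have hsplit := card_sized_mem_add_card_sized_notMem K k
  have hekr := card_sized_notMem_le_of_not_disjoint (K := K) hkn
    fun σ τ hσ hτ hστ => hτ (hK σ τ hστ hσ)
  have hpascal := Nat.choose_eq_choose_pred_add (n := n) (by omega) hk
  rw [Fintype.card_fin] at hsplit
  omega

end

theorem stmt6_general (d k : ℕ) (hk : 2 ≤ k) (hdk : 2 * k ≤ d + 3)
    (K : Finset (Finset (Fin (d + 3))))
    (hcount : (Finset.univ.filter (fun σ : Finset (Fin (d + 3)) =>
      σ.card = k ∧ σ ∈ K)).card < Nat.choose (d + 2) k) :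
    ∃ σ τ : Finset (Fin (d + 3)), Disjoint σ τ ∧ σ ∉ K ∧ τ ∉ K :=
  exists_disjoint_notMem_of_card_sized_mem_lt (by omega) hdk hcount

/-- Topological Erdős–Ko–Rado hypothesis check: if `k ≥ 2`, `d + 3 ≥ 2k`, and
`Σ` is a simplicial complex on `[d+3]` with fewer than `C(d+2, k)` faces of
size `k`, then the family of non-faces of `Σ` is not intersecting: there are
two disjoint non-faces. -/
theorem stmt6 (d k : ℕ) (hk : 2 ≤ k) (hdk : 2 * k ≤ d + 3)
    (K : Finset (Finset (Fin (d + 3))))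
    (hdc : ∀ σ ∈ K, ∀ τ ⊆ σ, τ ∈ K)
    (hcount : (Finset.univ.filter (fun σ : Finset (Fin (d + 3)) =>
      σ.card = k ∧ σ ∈ K)).card < Nat.choose (d + 2) k) :
    ∃ σ τ : Finset (Fin (d + 3)), Disjoint σ τ ∧ σ ∉ K ∧ τ ∉ K :=
  stmt6_general d k hk hdk K hcount
end
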